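/- arXiv:2303.11365 — 3 statements merged into one kernel-verified Lean document; each statement's English description precedes it below -/
import Mathlib

section
/- In any equilibrium (S_t), the rent satisfies the uniform upper bound r_t ≤ r̄·G^{γ·t} for all t, where r̄ := m·e1^γ·c(1, G·(1+w))^γ/c_y(1, G·w); consequently limsup_{t→∞} r_t^{1/t} ≤ G^γ. -/
open Real Filter Set Topology

/-- Assumption C: `c` is a positive, homogeneous of degree 1, twice continuously
differentiable function on `(0,∞)²` with partial derivatives `cy, cz > 0`, second partial
derivatives `cyy, czz < 0`, and Inada conditions. -/
structure AssumptionC (c cy cz cyy cyz czz : ℝ → ℝ → ℝ) : Prop where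
  c_pos : ∀ ⦃y z : ℝ⦄, 0 < y → 0 < z → 0 < c y z
  homog : ∀ ⦃l y z : ℝ⦄, 0 < l → 0 < y → 0 < z → c (l * y) (l * z) = l * c y z
  hderiv_y : ∀ ⦃y z : ℝ⦄, 0 < y → 0 < z → HasDerivAt (fun u => c u z) (cy y z) y
  hderiv_z : ∀ ⦃y z : ℝ⦄, 0 < y → 0 < z → HasDerivAt (fun v => c y v) (cz y z) z
  hderiv_yy : ∀ ⦃y z : ℝ⦄, 0 < y → 0 < z → HasDerivAt (fun u => cy u z) (cyy y z) y
  hderiv_yz : ∀ ⦃y z : ℝ⦄, 0 < y → 0 < z → HasDerivAt (fun v => cy y v) (cyz y z) z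
  hderiv_zy : ∀ ⦃y z : ℝ⦄, 0 < y → 0 < z → HasDerivAt (fun u => cz u z) (cyz y z) y
  hderiv_zz : ∀ ⦃y z : ℝ⦄, 0 < y → 0 < z → HasDerivAt (fun v => cz y v) (czz y z) z
  cy_pos : ∀ ⦃y z : ℝ⦄, 0 < y → 0 < z → 0 < cy y z
  cz_pos : ∀ ⦃y z : ℝ⦄, 0 < y → 0 < z → 0 < cz y z
  cyy_neg : ∀ ⦃y z : ℝ⦄, 0 < y → 0 < z → cyy y z < 0
  czz_neg : ∀ ⦃y z : ℝ⦄, 0 < y → 0 < z → czz y z < 0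
  cont2 : ContinuousOn (fun p : ℝ × ℝ => (cyy p.1 p.2, cyz p.1 p.2, czz p.1 p.2))
    {p : ℝ × ℝ | 0 < p.1 ∧ 0 < p.2}
  inada_y : ∀ ⦃z : ℝ⦄, 0 < z → Tendsto (fun y => cy y z) (𝓝[>] (0:ℝ)) atTop
  inada_z : ∀ ⦃y : ℝ⦄, 0 < y → Tendsto (fun z => cz y z) (𝓝[>] (0:ℝ)) atTop

/-- An equilibrium: `0 < S t < e1·G^t` and the difference equation
`S_{t+1}·c_z = S_t·c_y − m·c^γ` at `(y_t, z_t) = (e1·G^t − S_t, e2·G^{t+1} + S_{t+1})`. -/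
def IsEquilibrium (c cy cz : ℝ → ℝ → ℝ) (e1 e2 G γ m : ℝ) (S : ℕ → ℝ) : Prop :=
  ∀ t : ℕ, 0 < S t ∧ S t < e1 * G ^ t ∧
    S (t + 1) * cz (e1 * G ^ t - S t) (e2 * G ^ (t + 1) + S (t + 1)) =
      S t * cy (e1 * G ^ t - S t) (e2 * G ^ (t + 1) + S (t + 1)) -
        m * c (e1 * G ^ t - S t) (e2 * G ^ (t + 1) + S (t + 1)) ^ γ

/-- The rent `r_t = m·c(y_t,z_t)^γ / c_y(y_t,z_t)`. -/
noncomputable def rent (c cy : ℝ → ℝ → ℝ) (e1 e2 G γ m : ℝ) (S : ℕ → ℝ) (t : ℕ) : ℝ :=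
  m * c (e1 * G ^ t - S t) (e2 * G ^ (t + 1) + S (t + 1)) ^ γ /
    cy (e1 * G ^ t - S t) (e2 * G ^ (t + 1) + S (t + 1))

/-- The housing price `P_t = S_t − r_t`. -/
noncomputable def price (c cy : ℝ → ℝ → ℝ) (e1 e2 G γ m : ℝ) (S : ℕ → ℝ) (t : ℕ) : ℝ :=
  S t - rent c cy e1 e2 G γ m S t

/-- The gross interest rate `R_t = S_{t+1}/P_t`. -/
noncomputable def irate (c cy : ℝ → ℝ → ℝ) (e1 e2 G γ m : ℝ) (S : ℕ → ℝ) (t : ℕ) : ℝ :=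
  S (t + 1) / price c cy e1 e2 G γ m S t

/-!
The rent is `m·c(y,z)^γ / c_y(y,z)` at a consumption pair with `0 < y < e1·G^t` and
`e2·G^(t+1) < z < (e1 + e2)·G^(t+1)`. Monotonicity and homogeneity of `c` bound the numerator by
`(e1·G^t·c(1, G(1+w)))^γ`. Since `c_y` is homogeneous of degree 0 and decreasing in its first
argument, it is a decreasing function of `y/z < 1/(Gw)`, so the denominator is at least
`c_y(1, Gw)`. The growth bound on `r_t^{1/t}` follows because `r̄^{1/t} → 1`.
-/

theorem limsup_rpow_inv_le_of_le_mul_pow {u : ℕ → ℝ} {K a : ℝ} (hu : ∀ t, 0 ≤ u t)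
    (hK : 0 < K) (ha : 0 ≤ a) (h : ∀ t, u t ≤ K * a ^ t) :
    limsup (fun t : ℕ => u t ^ (t : ℝ)⁻¹) atTop ≤ a := by
  have hlim : Tendsto (fun t : ℕ => K ^ (t : ℝ)⁻¹ * a) atTop (𝓝 a) := by
    simpa using ((tendsto_const_nhds (x := K)).rpow
      (tendsto_inv_atTop_zero.comp tendsto_natCast_atTop_atTop) (Or.inl hK.ne')).mul_const a
  have hle : ∀ᶠ t : ℕ in atTop, u t ^ (t : ℝ)⁻¹ ≤ K ^ (t : ℝ)⁻¹ * a := by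
    filter_upwards [eventually_ne_atTop 0] with t ht
    calc u t ^ (t : ℝ)⁻¹ ≤ (K * a ^ t) ^ (t : ℝ)⁻¹ := rpow_le_rpow (hu t) (h t) (by positivity)
      _ = K ^ (t : ℝ)⁻¹ * a := by
        rw [mul_rpow hK.le (by positivity), pow_rpow_inv_natCast ha ht]
  calc limsup (fun t : ℕ => u t ^ (t : ℝ)⁻¹) atTop
      ≤ limsup (fun t : ℕ => K ^ (t : ℝ)⁻¹ * a) atTop :=
        limsup_le_limsup hle
          (isBoundedUnder_of ⟨0, fun t => rpow_nonneg (hu t) _⟩).isCoboundedUnder_le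
          hlim.isBoundedUnder_le
    _ = a := hlim.limsup_eq

namespace AssumptionC

variable {c cy cz cyy cyz czz : ℝ → ℝ → ℝ} (hC : AssumptionC c cy cz cyy cyz czz)
include hC

theorem strictMonoOn_left {z : ℝ} (hz : 0 < z) : StrictMonoOn (fun y => c y z) (Ioi 0) := by
  refine strictMonoOn_of_deriv_pos (convex_Ioi 0)
    (fun y hy => (hC.hderiv_y hy hz).continuousAt.continuousWithinAt) fun y hy => ?_
  rw [interior_Ioi] at hy
  rw [(hC.hderiv_y hy hz).deriv]
  exact hC.cy_pos hy hz

theorem strictMonoOn_right {y : ℝ} (hy : 0 < y) : StrictMonoOn (fun z => c y z) (Ioi 0) := by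
  refine strictMonoOn_of_deriv_pos (convex_Ioi 0)
    (fun z hz => (hC.hderiv_z hy hz).continuousAt.continuousWithinAt) fun z hz => ?_
  rw [interior_Ioi] at hz
  rw [(hC.hderiv_z hy hz).deriv]
  exact hC.cz_pos hy hz

theorem strictAntiOn_cy {z : ℝ} (hz : 0 < z) : StrictAntiOn (fun y => cy y z) (Ioi 0) := by
  refine strictAntiOn_of_deriv_neg (convex_Ioi 0)
    (fun y hy => (hC.hderiv_yy hy hz).continuousAt.continuousWithinAt) fun y hy => ?_
  rw [interior_Ioi] at hy
  rw [(hC.hderiv_yy hy hz).deriv]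
  exact hC.cyy_neg hy hz

/-- Differentiate `c (l * u) (l * z) = l * c u z` in `u`. -/
theorem cy_mul_mul {l y z : ℝ} (hl : 0 < l) (hy : 0 < y) (hz : 0 < z) :
    cy (l * y) (l * z) = cy y z := by
  have hscaled : HasDerivAt (fun u => c (l * u) (l * z)) (cy (l * y) (l * z) * l) y := by
    have h := (hC.hderiv_y (mul_pos hl hy) (mul_pos hl hz)).comp y
      ((hasDerivAt_id y).const_mul l)
    rwa [mul_one] at h
  have hhomog : (fun u => c (l * u) (l * z)) =ᶠ[𝓝 y] fun u => l * c u z := by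
    filter_upwards [Ioi_mem_nhds hy] with u hu
    exact hC.homog hl hu hz
  have h := (hscaled.congr_of_eventuallyEq hhomog.symm).unique ((hC.hderiv_y hy hz).const_mul l)
  rw [mul_comm] at h
  exact mul_left_cancel₀ hl.ne' h

theorem cy_lt_cy_of_div_lt {y z y' z' : ℝ} (hy : 0 < y) (hz : 0 < z) (hy' : 0 < y')
    (hz' : 0 < z') (h : y / z < y' / z') : cy y' z' < cy y z := by
  have hratio : ∀ {y z : ℝ}, 0 < y → 0 < z → cy y z = cy (y / z) 1 := fun hy hz => by
    simpa [mul_div_cancel₀ _ hz.ne'] using hC.cy_mul_mul hz (div_pos hy hz) one_pos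
  rw [hratio hy hz, hratio hy' hz']
  exact hC.strictAntiOn_cy one_pos (div_pos hy hz) (div_pos hy' hz') h

theorem c_lt_mul_c_one {a k y z : ℝ} (hy : 0 < y) (hya : y < a) (hz : 0 < z)
    (hzk : z < a * k) : c y z < a * c 1 k := by
  have ha : 0 < a := hy.trans hya
  have hk : 0 < k := pos_of_mul_pos_right (hz.trans hzk) ha.le
  calc c y z < c a z := hC.strictMonoOn_left hz hy ha hya
    _ < c a (a * k) := hC.strictMonoOn_right ha hz (mul_pos ha hk) hzk
    _ = a * c 1 k := by simpa using hC.homog ha one_pos hk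

theorem cy_one_lt {a k y z : ℝ} (hy : 0 < y) (hya : y < a) (hk : 0 < k) (hkz : a * k < z) :
    cy 1 k < cy y z := by
  have ha : 0 < a := hy.trans hya
  have hz : 0 < z := (mul_pos ha hk).trans hkz
  rw [← hC.cy_mul_mul ha one_pos hk, mul_one]
  refine hC.cy_lt_cy_of_div_lt hy hz ha (mul_pos ha hk) ?_
  calc y / z < a / z := div_lt_div_of_pos_right hya hz
    _ < a / (a * k) := div_lt_div_of_pos_left ha (mul_pos ha hk) hkz

end AssumptionC

section Rent

variable {c cy cz cyy cyz czz : ℝ → ℝ → ℝ} {e1 e2 G γ m : ℝ} {S : ℕ → ℝ}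

theorem rent_nonneg (hC : AssumptionC c cy cz cyy cyz czz) (he2 : 0 < e2) (hG : 0 < G)
    (hm : 0 < m) (hS : ∀ t, 0 < S t ∧ S t < e1 * G ^ t) (t : ℕ) :
    0 ≤ rent c cy e1 e2 G γ m S t := by
  have hy : 0 < e1 * G ^ t - S t := sub_pos.mpr (hS t).2
  have hz : 0 < e2 * G ^ (t + 1) + S (t + 1) := by have := (hS (t + 1)).1; positivity
  exact div_nonneg (mul_nonneg hm.le (rpow_nonneg (hC.c_pos hy hz).le _)) (hC.cy_pos hy hz).le

theorem rent_le_mul_rpow (hC : AssumptionC c cy cz cyy cyz czz) (he1 : 0 < e1) (he2 : 0 < e2)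
    (hG : 0 < G) (hγ : 0 ≤ γ) (hm : 0 < m) (hS : ∀ t, 0 < S t ∧ S t < e1 * G ^ t) (t : ℕ) :
    rent c cy e1 e2 G γ m S t ≤
      m * e1 ^ γ * c 1 (G * (1 + e2 / e1)) ^ γ / cy 1 (G * (e2 / e1)) * G ^ (γ * (t : ℝ)) := by
  set y := e1 * G ^ t - S t
  set z := e2 * G ^ (t + 1) + S (t + 1)
  have hy : 0 < y := sub_pos.mpr (hS t).2
  have hya : y < e1 * G ^ t := sub_lt_self _ (hS t).1
  have hz : 0 < z := by have := (hS (t + 1)).1; positivity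
  have hzk : z < e1 * G ^ t * (G * (1 + e2 / e1)) := by
    calc z < e2 * G ^ (t + 1) + e1 * G ^ (t + 1) := (add_lt_add_iff_left _).2 (hS (t + 1)).2
      _ = _ := by field_simp; ring
  have hkz : e1 * G ^ t * (G * (e2 / e1)) < z := by
    have h : e1 * G ^ t * (G * (e2 / e1)) = e2 * G ^ (t + 1) := by field_simp; ring
    simpa [h, z] using (hS (t + 1)).1
  have hc := hC.c_lt_mul_c_one hy hya hz hzk
  have hcy := hC.cy_one_lt hy hya (by positivity) hkz
  have hc1 := hC.c_pos one_pos (show 0 < G * (1 + e2 / e1) by positivity)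
  have hcy1 := hC.cy_pos one_pos (show 0 < G * (e2 / e1) by positivity)
  calc rent c cy e1 e2 G γ m S t = m * c y z ^ γ / cy y z := rfl
    _ ≤ m * (e1 * G ^ t * c 1 (G * (1 + e2 / e1))) ^ γ / cy 1 (G * (e2 / e1)) := by
      gcongr
      exact (hC.c_pos hy hz).le
    _ = _ := by
      rw [mul_rpow (by positivity) hc1.le, mul_rpow he1.le (by positivity), ← rpow_natCast,
        ← rpow_mul hG.le, mul_comm (t : ℝ) γ]
      ring

end Rent

/-- Uniform rent bound: `r_t ≤ r̄·G^{γt}` with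
`r̄ = m·e1^γ·c(1, G(1+w))^γ / c_y(1, Gw)`, hence `limsup r_t^{1/t} ≤ G^γ`. -/
theorem stmt_7 (c cy cz cyy cyz czz : ℝ → ℝ → ℝ)
    (hC : AssumptionC c cy cz cyy cyz czz) (e1 e2 G γ m : ℝ)
    (he1 : 0 < e1) (he2 : 0 < e2) (hG : 1 < G) (hγ : 0 < γ) (hm : 0 < m)
    (S : ℕ → ℝ) (hS : IsEquilibrium c cy cz e1 e2 G γ m S) :
    (∀ t : ℕ, rent c cy e1 e2 G γ m S t ≤
      m * e1 ^ γ * c 1 (G * (1 + e2 / e1)) ^ γ / cy 1 (G * (e2 / e1)) *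
        G ^ (γ * (t : ℝ))) ∧
    limsup (fun t : ℕ => rent c cy e1 e2 G γ m S t ^ ((t : ℝ)⁻¹)) atTop ≤ G ^ γ := by
  have hG0 : 0 < G := one_pos.trans hG
  have hfeasible : ∀ t, 0 < S t ∧ S t < e1 * G ^ t := fun t => ⟨(hS t).1, (hS t).2.1⟩
  have hbound := rent_le_mul_rpow hC he1 he2 hG0 hγ.le hm hfeasible
  set K := m * e1 ^ γ * c 1 (G * (1 + e2 / e1)) ^ γ / cy 1 (G * (e2 / e1))
  have hK : 0 < K := by
    have hc1 := hC.c_pos one_pos (show 0 < G * (1 + e2 / e1) by positivity)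
    have hcy1 := hC.cy_pos one_pos (show 0 < G * (e2 / e1) by positivity)
    positivity
  refine ⟨hbound, limsup_rpow_inv_le_of_le_mul_pow (K := K)
    (rent_nonneg hC he2 hG0 hm hfeasible) hK (rpow_nonneg hG0.le γ) fun t => ?_⟩
  rw [← rpow_natCast, ← rpow_mul hG0.le]
  exact hbound t
end

section
/- (Long run rent growth.) Suppose 0 < γ < 1. Then in any equilibrium (S_t), the long run rent growth rate satisfies limsup_{t→∞} r_t^{1/t} = G^γ. -/
open Real Filter Set Topology

/-!
By homogeneity of `c`, the consumptions `y_t, z_t` divided by `G ^ t` stay in a fixed box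
`(0, e1] × [e2 G, (e1 + e2) G]`, and `r_t = G ^ (γ t) · ρ(y_t / G^t, z_t / G^t)` with
`ρ = m c^γ / c_y`. On the box `ρ` is bounded above, so `limsup r_t^{1/t} ≤ G^γ`, and bounded
below by a positive constant wherever `y_t / G^t ≥ ε`. The detrended young consumption cannot
tend to `0`: dividing the equilibrium equation by `G ^ t` bounds `(S_t / G^t) c_y`, while
`S_t / G^t → e1` and the Inada condition would send `c_y` to infinity.
-/

lemma monotoneOn_Ioi_of_hasDerivAt_nonneg {f f' : ℝ → ℝ} {a : ℝ}
    (hf : ∀ x, a < x → HasDerivAt f (f' x) x) (hf' : ∀ x, a < x → 0 ≤ f' x) :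
    MonotoneOn f (Ioi a) :=
  monotoneOn_of_hasDerivWithinAt_nonneg (convex_Ioi a)
    (fun x hx => (hf x hx).continuousAt.continuousWithinAt)
    (fun x hx => (hf x (interior_subset hx :)).hasDerivWithinAt)
    (fun x hx => hf' x (interior_subset hx :))

lemma antitoneOn_Ioi_of_hasDerivAt_nonpos {f f' : ℝ → ℝ} {a : ℝ}
    (hf : ∀ x, a < x → HasDerivAt f (f' x) x) (hf' : ∀ x, a < x → f' x ≤ 0) :
    AntitoneOn f (Ioi a) :=
  antitoneOn_of_hasDerivWithinAt_nonpos (convex_Ioi a)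
    (fun x hx => (hf x hx).continuousAt.continuousWithinAt)
    (fun x hx => (hf x (interior_subset hx :)).hasDerivWithinAt)
    (fun x hx => hf' x (interior_subset hx :))

lemma HasDerivAt.eq_of_scaling {φ ψ : ℝ → ℝ} {φ' ψ' l y : ℝ} (hl : 0 < l) (hy : 0 < y)
    (hφ : HasDerivAt φ φ' y) (hψ : HasDerivAt ψ ψ' (l * y))
    (hscale : ∀ u, 0 < u → ψ (l * u) = l * φ u) : ψ' = φ' := by
  have hlin : HasDerivAt (fun u => l * u) l y := by
    simpa using (hasDerivAt_id y).const_mul l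
  have hcomp : HasDerivAt (fun u => ψ (l * u)) (ψ' * l) y := hψ.comp y hlin
  have hscaled : HasDerivAt (fun u => ψ (l * u)) (l * φ') y :=
    (hφ.const_mul l).congr_of_eventuallyEq
      (eventually_gt_nhds hy |>.mono fun u hu => hscale u hu)
  have := hcomp.unique hscaled
  rw [mul_comm] at this
  exact mul_left_cancel₀ hl.ne' this

lemma tendsto_const_mul_pow_rpow_inv {A q : ℝ} (hA : 0 < A) (hq : 0 ≤ q) :
    Tendsto (fun t : ℕ => (q ^ t * A) ^ (t : ℝ)⁻¹) atTop (𝓝 q) := by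
  have hroot : Tendsto (fun t : ℕ => A ^ (t : ℝ)⁻¹) atTop (𝓝 1) := by
    simpa [Function.comp_def] using (continuousAt_const_rpow hA.ne').tendsto.comp
      (tendsto_inv_atTop_zero.comp tendsto_natCast_atTop_atTop)
  refine (by simpa using hroot.const_mul q : Tendsto (fun t : ℕ => q * A ^ (t : ℝ)⁻¹) _ _)
    |>.congr' ?_
  filter_upwards [eventually_ne_atTop 0] with t ht
  rw [mul_rpow (pow_nonneg hq t) hA.le, ← rpow_natCast, ← rpow_mul hq,
    mul_inv_cancel₀ (Nat.cast_ne_zero.2 ht), rpow_one]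

lemma limsup_pow_mul_rpow_inv {q A B : ℝ} {ρ : ℕ → ℝ} (hq : 0 ≤ q) (hA : 0 < A) (hB : 0 < B)
    (hρ : ∀ t, ρ t ∈ Icc 0 A) (hfreq : ∃ᶠ t in atTop, B ≤ ρ t) :
    limsup (fun t : ℕ => (q ^ t * ρ t) ^ (t : ℝ)⁻¹) atTop = q := by
  have hupper := tendsto_const_mul_pow_rpow_inv hA hq
  have hle : ∀ t : ℕ, (q ^ t * ρ t) ^ (t : ℝ)⁻¹ ≤ (q ^ t * A) ^ (t : ℝ)⁻¹ := fun t => by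
    gcongr
    exacts [mul_nonneg (pow_nonneg hq t) (hρ t).1, (hρ t).2]
  have hbdd : IsBoundedUnder (· ≤ ·) atTop fun t : ℕ => (q ^ t * ρ t) ^ (t : ℝ)⁻¹ :=
    hupper.isBoundedUnder_le.mono_le (Eventually.of_forall hle)
  apply le_antisymm
  · calc limsup (fun t : ℕ => (q ^ t * ρ t) ^ (t : ℝ)⁻¹) atTop
        ≤ limsup (fun t : ℕ => (q ^ t * A) ^ (t : ℝ)⁻¹) atTop :=
          limsup_le_limsup (Eventually.of_forall hle) (isCoboundedUnder_le_of_le atTop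
            fun t => rpow_nonneg (mul_nonneg (pow_nonneg hq t) (hρ t).1) _)
            hupper.isBoundedUnder_le
      _ = q := hupper.limsup_eq
  · refine le_of_forall_sub_le fun δ hδ => le_limsup_of_frequently_le ?_ hbdd
    have hlower := (tendsto_const_mul_pow_rpow_inv hB hq).eventually
      (eventually_ge_nhds (sub_lt_self q hδ))
    refine (hfreq.and_eventually hlower).mono fun t ⟨hBt, hδt⟩ => hδt.trans ?_
    gcongr

noncomputable def rentAt (c cy : ℝ → ℝ → ℝ) (γ m y z : ℝ) : ℝ := m * c y z ^ γ / cy y z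

namespace AssumptionC

variable {c cy cz cyy cyz czz : ℝ → ℝ → ℝ} {a a' b b' : ℝ}

lemma c_le_c (hC : AssumptionC c cy cz cyy cyz czz) (ha : 0 < a) (haa' : a ≤ a')
    (hb : 0 < b) (hbb' : b ≤ b') : c a b ≤ c a' b' :=
  calc c a b
      ≤ c a b' := monotoneOn_Ioi_of_hasDerivAt_nonneg (fun _ hz => hC.hderiv_z ha hz)
        (fun _ hz => (hC.cz_pos ha hz).le) hb (hb.trans_le hbb') hbb'
    _ ≤ c a' b' := monotoneOn_Ioi_of_hasDerivAt_nonneg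
        (fun _ hy => hC.hderiv_y hy (hb.trans_le hbb'))
        (fun _ hy => (hC.cy_pos hy (hb.trans_le hbb')).le) ha (ha.trans_le haa') haa'

lemma cy_homog (hC : AssumptionC c cy cz cyy cyz czz) {l y z : ℝ} (hl : 0 < l) (hy : 0 < y)
    (hz : 0 < z) : cy (l * y) (l * z) = cy y z :=
  HasDerivAt.eq_of_scaling hl hy (hC.hderiv_y hy hz)
    (hC.hderiv_y (mul_pos hl hy) (mul_pos hl hz)) fun _ hu => hC.homog hl hu hz

lemma cz_homog (hC : AssumptionC c cy cz cyy cyz czz) {l y z : ℝ} (hl : 0 < l) (hy : 0 < y)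
    (hz : 0 < z) : cz (l * y) (l * z) = cz y z :=
  HasDerivAt.eq_of_scaling hl hz (hC.hderiv_z hy hz)
    (hC.hderiv_z (mul_pos hl hy) (mul_pos hl hz)) fun _ hv => hC.homog hl hy hv

lemma cy_antitoneOn_left (hC : AssumptionC c cy cz cyy cyz czz) (hb : 0 < b) :
    AntitoneOn (fun y => cy y b) (Ioi 0) :=
  antitoneOn_Ioi_of_hasDerivAt_nonpos (fun _ hy => hC.hderiv_yy hy hb)
    fun _ hy => (hC.cyy_neg hy hb).le

lemma cz_antitoneOn_right (hC : AssumptionC c cy cz cyy cyz czz) (ha : 0 < a) :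
    AntitoneOn (fun z => cz a z) (Ioi 0) :=
  antitoneOn_Ioi_of_hasDerivAt_nonpos (fun _ hz => hC.hderiv_zz ha hz)
    fun _ hz => (hC.czz_neg ha hz).le

/-- By homogeneity, raising `z` from `b` to `b'` acts on `cy` like raising `y` by the
factor `b' / b`. -/
lemma cy_le_cy (hC : AssumptionC c cy cz cyy cyz czz) (ha : 0 < a) (haa' : a ≤ a')
    (hb : 0 < b) (hbb' : b ≤ b') : cy a' b ≤ cy a b' := by
  have hb' : 0 < b' := hb.trans_le hbb'
  have hl : 0 < b' / b := div_pos hb' hb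
  have hscaled : cy a' b = cy (b' / b * a') b' := by
    rw [← hC.cy_homog hl (ha.trans_le haa') hb, div_mul_cancel₀ _ hb.ne']
  rw [hscaled]
  refine hC.cy_antitoneOn_left hb' ha (mul_pos hl (ha.trans_le haa')) ?_
  nlinarith [(one_le_div hb).2 hbb']

lemma cz_le_cz (hC : AssumptionC c cy cz cyy cyz czz) (ha : 0 < a) (haa' : a ≤ a')
    (hb : 0 < b) (hbb' : b ≤ b') : cz a b' ≤ cz a' b := by
  have ha' : 0 < a' := ha.trans_le haa'
  have hl : 0 < a' / a := div_pos ha' ha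
  have hscaled : cz a b' = cz a' (a' / a * b') := by
    rw [← hC.cz_homog hl ha (hb.trans_le hbb'), div_mul_cancel₀ _ ha.ne']
  rw [hscaled]
  refine hC.cz_antitoneOn_right ha' hb (mul_pos hl (hb.trans_le hbb')) ?_
  nlinarith [(one_le_div ha).2 haa']

variable {m γ x w : ℝ}

lemma mul_rpow_div_cy_pos (hC : AssumptionC c cy cz cyy cyz czz) (hm : 0 < m) (ha : 0 < a)
    (hb : 0 < b) (ha' : 0 < a') (hb' : 0 < b') : 0 < m * c a b ^ γ / cy a' b' :=
  div_pos (mul_pos hm (rpow_pos_of_pos (hC.c_pos ha hb) γ)) (hC.cy_pos ha' hb')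

lemma rentAt_le (hC : AssumptionC c cy cz cyy cyz czz) (hm : 0 ≤ m) (hγ : 0 ≤ γ)
    (hx : 0 < x) (hxa : x ≤ a) (hb : 0 < b) (hbw : b ≤ w) (hwb' : w ≤ b') :
    rentAt c cy γ m x w ≤ m * c a b' ^ γ / cy a b := by
  have hw : 0 < w := hb.trans_le hbw
  unfold rentAt
  gcongr m * ?_ / ?_
  · exact mul_nonneg hm (rpow_nonneg (hC.c_pos (hx.trans_le hxa) (hw.trans_le hwb')).le _)
  · exact hC.cy_pos (hx.trans_le hxa) hb
  · exact rpow_le_rpow (hC.c_pos hx hw).le (hC.c_le_c hx hxa hw hwb') hγ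
  · exact hC.cy_le_cy hx hxa hb hbw

lemma le_rentAt (hC : AssumptionC c cy cz cyy cyz czz) (hm : 0 ≤ m) (hγ : 0 ≤ γ)
    (ha : 0 < a) (hax : a ≤ x) (hb : 0 < b) (hbw : b ≤ w) (hwb' : w ≤ b') :
    m * c a b ^ γ / cy a b' ≤ rentAt c cy γ m x w := by
  have hw : 0 < w := hb.trans_le hbw
  unfold rentAt
  gcongr m * ?_ / ?_
  · exact mul_nonneg hm (rpow_nonneg (hC.c_pos (ha.trans_le hax) hw).le _)
  · exact hC.cy_pos (ha.trans_le hax) hw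
  · exact rpow_le_rpow (hC.c_pos ha hb).le (hC.c_le_c ha hax hb hbw) hγ
  · exact hC.cy_le_cy ha hax hw hwb'

end AssumptionC

noncomputable def detrendedYoung (e1 G : ℝ) (S : ℕ → ℝ) (t : ℕ) : ℝ := e1 - S t / G ^ t

noncomputable def detrendedOld (e2 G : ℝ) (S : ℕ → ℝ) (t : ℕ) : ℝ := e2 * G + S (t + 1) / G ^ t

lemma young_eq_pow_mul_detrendedYoung {e1 G : ℝ} (S : ℕ → ℝ) (t : ℕ) (hG : G ≠ 0) :
    e1 * G ^ t - S t = G ^ t * detrendedYoung e1 G S t := by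
  unfold detrendedYoung
  field_simp

lemma old_eq_pow_mul_detrendedOld {e2 G : ℝ} (S : ℕ → ℝ) (t : ℕ) (hG : G ≠ 0) :
    e2 * G ^ (t + 1) + S (t + 1) = G ^ t * detrendedOld e2 G S t := by
  unfold detrendedOld
  field_simp
  ring

namespace IsEquilibrium

variable {c cy cz cyy cyz czz : ℝ → ℝ → ℝ} {e1 e2 G γ m : ℝ} {S : ℕ → ℝ}

lemma detrended_mem (hS : IsEquilibrium c cy cz e1 e2 G γ m S) (hG : 0 < G) (t : ℕ) :
    detrendedYoung e1 G S t ∈ Ioc 0 e1 ∧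
      detrendedOld e2 G S t ∈ Icc (e2 * G) ((e1 + e2) * G) := by
  have hGt : 0 < G ^ t := pow_pos hG t
  obtain ⟨hS0, hS1, -⟩ := hS t
  obtain ⟨hS0', hS1', -⟩ := hS (t + 1)
  have hyoung : S t / G ^ t < e1 := (div_lt_iff₀ hGt).2 hS1
  have hold : S (t + 1) / G ^ t < e1 * G :=
    (div_lt_iff₀ hGt).2 (by rw [pow_succ] at hS1'; linarith)
  unfold detrendedYoung detrendedOld
  exact ⟨⟨by linarith, by linarith [div_pos hS0 hGt]⟩, by linarith [div_pos hS0' hGt],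
    by linarith⟩

lemma rent_eq (hS : IsEquilibrium c cy cz e1 e2 G γ m S) (hC : AssumptionC c cy cz cyy cyz czz)
    (hG : 0 < G) (he2 : 0 < e2) (t : ℕ) :
    rent c cy e1 e2 G γ m S t =
      (G ^ γ) ^ t * rentAt c cy γ m (detrendedYoung e1 G S t) (detrendedOld e2 G S t) := by
  obtain ⟨⟨hy, -⟩, hzlo, -⟩ := hS.detrended_mem hG t
  have hz : 0 < detrendedOld e2 G S t := (mul_pos he2 hG).trans_le hzlo
  have hGt : 0 < G ^ t := pow_pos hG t
  rw [rent, rentAt, young_eq_pow_mul_detrendedYoung S t hG.ne',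
    old_eq_pow_mul_detrendedOld S t hG.ne',
    hC.homog hGt hy hz, hC.cy_homog hGt hy hz, mul_rpow hGt.le (hC.c_pos hy hz).le,
    ← rpow_natCast, ← rpow_natCast, ← rpow_mul hG.le, ← rpow_mul hG.le, mul_comm (t : ℝ)]
  ring

/-- The equilibrium equation divided by `G ^ t`; its rent term `m c^γ` grows only like
`G ^ (γ t) ≤ G ^ t`. -/
lemma detrended_savings_mul_cy_le (hS : IsEquilibrium c cy cz e1 e2 G γ m S)
    (hC : AssumptionC c cy cz cyy cyz czz) (he2 : 0 < e2) (hG : 1 ≤ G) (hγ0 : 0 ≤ γ)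
    (hγ1 : γ ≤ 1) (hm : 0 ≤ m) (t : ℕ) :
    S t / G ^ t * cy (detrendedYoung e1 G S t) (e2 * G) ≤
      e1 * G * cz e1 (e2 * G) + m * c e1 ((e1 + e2) * G) ^ γ := by
  have hG0 : 0 < G := one_pos.trans_le hG
  have hGt : 0 < G ^ t := pow_pos hG0 t
  obtain ⟨⟨hy, hye1⟩, hzlo, hzhi⟩ := hS.detrended_mem hG0 t
  set y := detrendedYoung e1 G S t
  set z := detrendedOld e2 G S t
  have he1 : 0 < e1 := hy.trans_le hye1
  have he2G : 0 < e2 * G := mul_pos he2 hG0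
  have hz : 0 < z := he2G.trans_le hzlo
  obtain ⟨hS0, -, heq⟩ := hS t
  obtain ⟨-, hS1, -⟩ := hS (t + 1)
  rw [young_eq_pow_mul_detrendedYoung S t hG0.ne', old_eq_pow_mul_detrendedOld S t hG0.ne',
    hC.homog hGt hy hz, hC.cy_homog hGt hy hz, hC.cz_homog hGt hy hz,
    mul_rpow hGt.le (hC.c_pos hy hz).le] at heq
  have hcy : cy y (e2 * G) ≤ cy y z := hC.cy_le_cy hy le_rfl he2G hzlo
  have hcz : cz y z ≤ cz e1 (e2 * G) := hC.cz_le_cz hy hye1 he2G hzlo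
  have hc : c y z ^ γ ≤ c e1 ((e1 + e2) * G) ^ γ :=
    rpow_le_rpow (hC.c_pos hy hz).le (hC.c_le_c hy hye1 hz hzhi) hγ0
  have hpow : (G ^ t) ^ γ ≤ G ^ t := by
    simpa using rpow_le_rpow_of_exponent_le (one_le_pow₀ hG : 1 ≤ G ^ t) hγ1
  have hS1 : S (t + 1) ≤ e1 * G * G ^ t := by rw [pow_succ] at hS1; linarith
  rw [div_mul_eq_mul_div, div_le_iff₀ hGt]
  calc S t * cy y (e2 * G)
      ≤ S t * cy y z := by gcongr
    _ = S (t + 1) * cz y z + m * ((G ^ t) ^ γ * c y z ^ γ) := by linarith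
    _ ≤ e1 * G * G ^ t * cz e1 (e2 * G) + m * (G ^ t * c e1 ((e1 + e2) * G) ^ γ) := by
        have := (hC.cz_pos hy hz).le
        have := rpow_nonneg (hC.c_pos hy hz).le γ
        gcongr
    _ = (e1 * G * cz e1 (e2 * G) + m * c e1 ((e1 + e2) * G) ^ γ) * G ^ t := by ring

/-- If the detrended consumption of the young tended to `0`, the Inada condition would make the
left side of `detrended_savings_mul_cy_le` unbounded. -/
lemma exists_frequently_le_detrendedYoung (hS : IsEquilibrium c cy cz e1 e2 G γ m S)
    (hC : AssumptionC c cy cz cyy cyz czz) (he1 : 0 < e1) (he2 : 0 < e2) (hG : 1 ≤ G)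
    (hγ0 : 0 ≤ γ) (hγ1 : γ ≤ 1) (hm : 0 ≤ m) :
    ∃ ε > 0, ∃ᶠ t in atTop, ε ≤ detrendedYoung e1 G S t := by
  by_contra! hsmall
  have hG0 : 0 < G := one_pos.trans_le hG
  have hpos : ∀ t, 0 < detrendedYoung e1 G S t := fun t => (hS.detrended_mem hG0 t).1.1
  have hzero : Tendsto (detrendedYoung e1 G S) atTop (𝓝[>] 0) :=
    tendsto_nhdsWithin_iff.2 ⟨tendsto_order.2 ⟨fun _ ha => .of_forall fun t => ha.trans (hpos t),
      hsmall⟩, .of_forall hpos⟩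
  have hsavings : Tendsto (fun t => S t / G ^ t) atTop (𝓝 e1) := by
    have := (tendsto_const_nhds : Tendsto (fun _ : ℕ => e1) atTop (𝓝 e1)).sub
      (tendsto_nhds_of_tendsto_nhdsWithin hzero)
    simpa [detrendedYoung] using this
  obtain ⟨t, ht⟩ := ((hsavings.pos_mul_atTop he1 ((hC.inada_y (mul_pos he2 hG0)).comp hzero)
    ).eventually_gt_atTop (e1 * G * cz e1 (e2 * G) + m * c e1 ((e1 + e2) * G) ^ γ)).exists
  exact (hS.detrended_savings_mul_cy_le hC he2 hG hγ0 hγ1 hm t).not_gt ht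

end IsEquilibrium

/-- Long run rent growth: if `0 < γ < 1`, in any equilibrium `limsup r_t^{1/t} = G^γ`. -/
theorem stmt_9 (c cy cz cyy cyz czz : ℝ → ℝ → ℝ)
    (hC : AssumptionC c cy cz cyy cyz czz) (e1 e2 G γ m : ℝ)
    (he1 : 0 < e1) (he2 : 0 < e2) (hG : 1 < G) (hγ0 : 0 < γ) (hγ1 : γ < 1) (hm : 0 < m)
    (S : ℕ → ℝ) (hS : IsEquilibrium c cy cz e1 e2 G γ m S) :
    limsup (fun t : ℕ => rent c cy e1 e2 G γ m S t ^ ((t : ℝ)⁻¹)) atTop = G ^ γ := by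
  have hG0 : 0 < G := one_pos.trans hG
  have he2G : 0 < e2 * G := mul_pos he2 hG0
  have hbigG : 0 < (e1 + e2) * G := by positivity
  obtain ⟨ε, hε, hfreq⟩ :=
    hS.exists_frequently_le_detrendedYoung hC he1 he2 hG.le hγ0.le hγ1.le hm.le
  simp only [hS.rent_eq hC hG0 he2]
  refine limsup_pow_mul_rpow_inv (rpow_nonneg hG0.le γ)
    (hC.mul_rpow_div_cy_pos (γ := γ) hm he1 hbigG he1 he2G)
    (hC.mul_rpow_div_cy_pos (γ := γ) hm hε he2G hε hbigG)
    (fun t => ?_) (hfreq.mono fun t hεt => ?_)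
  all_goals obtain ⟨⟨hy, hye1⟩, hzlo, hzhi⟩ := hS.detrended_mem hG0 t
  · have hz := he2G.trans_le hzlo
    exact ⟨(hC.mul_rpow_div_cy_pos hm hy hz hy hz).le,
      hC.rentAt_le hm.le hγ0.le hy hye1 he2G hzlo hzhi⟩
  · exact hC.le_rentAt hm.le hγ0.le hε hεt he2G hzlo hzhi
end

section
/- (Eigenvalue computation at the bubbly steady state.) Suppose G > 1 and 0 < w < w_b^*, where w_b^* > 0 is the unique solution of c_y(1,G·w_b^*)/c_z(1,G·w_b^*) = G. Let s := (w_b^* − w)/(w_b^* + 1) ∈ (0,1), (y,z) := (1−s, G·(w+s)), x := y/z, g(u) := c(u,1), and ε := c_y·c_z/(c·c_yz) evaluated at (y,z). Define n := g'(x) − (s·(1+w)/(G·(w+s)²))·g''(x) and d := g'(x) + (s·(1−s)·(1+w)/(G·(w+s)³))·g''(x). Then: (a) n = (1 + (1/ε)·s/(1−s))·g'(x) and d = (1 − (1/ε)·s/(w+s))·g'(x); (b) n > d; (c) d = 0 if and only if ε = (1−w/w_b^*)/(1+w); and (d) if ((1−w_b^*)/2)·(1−w/w_b^*)/(1+w)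 < ε and ε ≠ (1−w/w_b^*)/(1+w), then d ≠ 0 and |n/d| > 1. -/
open Real Filter Set Topology

/-! At the steady state, homogeneity reduces every derivative of `c` at `(y, z)` to `g = c(·, 1)`
at `x = y / z`: `c_y = g'(x)`, `c_z = g(x) - x g'(x)` and `c_yz = -(x / z) g''(x)`. The
steady-state condition `c_y = G c_z` then gives `g(x) = c_z (1 + G x)`, so
`ε = g'(x) / K` with `K = -x (1 + G x) g''(x) > 0`. Substituting
`x = (1 - s) / (G (w + s))` turns the two quantities into `n = K (ε + s / (1 - s))` and
`d = K (ε - s / (w + s))`, and `s / (1 - s) = w_b^* · s / (w + s)`. Everything else is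
elementary algebra in `ε`: `d = 0` iff `ε = s / (w + s)`, and `|n / d| > 1` iff `n + d > 0`,
i.e. iff `ε > (1 - w_b^*) / 2 · s / (w + s)`. -/

theorem HasDerivAt.eq_of_eventually_comp_const_mul {f g : ℝ → ℝ} {l a f' g' : ℝ}
    (hl : l ≠ 0) (hf : HasDerivAt f f' (l * a)) (hg : HasDerivAt g g' a)
    (hfg : (fun u => f (l * u)) =ᶠ[𝓝 a] fun u => l * g u) : f' = g' := by
  have hcomp : HasDerivAt (fun u => f (l * u)) (f' * l) a := by
    have := hf.comp a ((hasDerivAt_id' a).const_mul l)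
    rwa [mul_one] at this
  have := (hcomp.congr_of_eventuallyEq hfg.symm).unique (hg.const_mul l)
  exact mul_left_cancel₀ hl (by linarith)

namespace AssumptionC

variable {c cy cz cyy cyz czz : ℝ → ℝ → ℝ} (hC : AssumptionC c cy cz cyy cyz czz)
include hC

theorem cz_mul_mul {l y z : ℝ} (hl : 0 < l) (hy : 0 < y) (hz : 0 < z) :
    cz (l * y) (l * z) = cz y z :=
  (hC.hderiv_z (mul_pos hl hy) (mul_pos hl hz)).eq_of_eventually_comp_const_mul hl.ne'
    (f := fun v => c (l * y) v) (hC.hderiv_z hy hz)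
    (by filter_upwards [eventually_gt_nhds hz] with v hv using hC.homog hl hy hv)

theorem cy_div_one {y z : ℝ} (hy : 0 < y) (hz : 0 < z) : cy (y / z) 1 = cy y z := by
  simpa [mul_div_cancel₀ y hz.ne'] using (hC.cy_mul_mul hz (div_pos hy hz) one_pos).symm

theorem c_eq_mul_c_div {y z : ℝ} (hy : 0 < y) (hz : 0 < z) : c y z = z * c (y / z) 1 := by
  simpa [mul_div_cancel₀ y hz.ne'] using hC.homog hz (div_pos hy hz) one_pos

/-- Euler's relation `c = y c_y + z c_z`, written in terms of `g = c(·, 1)`. -/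
theorem cz_eq {y z : ℝ} (hy : 0 < y) (hz : 0 < z) :
    cz y z = c (y / z) 1 - y / z * cy (y / z) 1 := by
  have hdiv : HasDerivAt (fun v : ℝ => y / v) (-(y / z ^ 2)) z := by
    simpa [div_eq_mul_inv] using (hasDerivAt_inv hz.ne').const_mul y
  have hscaled : HasDerivAt (fun v : ℝ => v * c (y / v) 1)
      (1 * c (y / z) 1 + z * (cy (y / z) 1 * -(y / z ^ 2))) z :=
    (hasDerivAt_id z).mul ((hC.hderiv_y (div_pos hy hz) one_pos).comp z hdiv)
  have hc : (fun v => c y v) =ᶠ[𝓝 z] fun v => v * c (y / v) 1 := by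
    filter_upwards [eventually_gt_nhds hz] with v hv using hC.c_eq_mul_c_div hy hv
  rw [(hC.hderiv_z hy hz).unique (hscaled.congr_of_eventuallyEq hc)]
  field_simp
  ring

theorem cyz_eq {y z : ℝ} (hy : 0 < y) (hz : 0 < z) :
    cyz y z = -(y / z ^ 2) * cyy (y / z) 1 := by
  have hdiv : HasDerivAt (fun v : ℝ => y / v) (-(y / z ^ 2)) z := by
    simpa [div_eq_mul_inv] using (hasDerivAt_inv hz.ne').const_mul y
  have hcy : (fun v => cy y v) =ᶠ[𝓝 z] fun v => cy (y / v) 1 := by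
    filter_upwards [eventually_gt_nhds hz] with v hv using (hC.cy_div_one hy hv).symm
  rw [mul_comm]
  exact (hC.hderiv_yz hy hz).unique
    (((hC.hderiv_yy (div_pos hy hz) one_pos).comp z hdiv).congr_of_eventuallyEq hcy)

theorem deriv_c_one {x : ℝ} (hx : 0 < x) : deriv (fun u => c u 1) x = cy x 1 :=
  (hC.hderiv_y hx one_pos).deriv

theorem deriv_deriv_c_one {x : ℝ} (hx : 0 < x) :
    deriv (deriv (fun u => c u 1)) x = cyy x 1 := by
  have hg' : deriv (fun u => c u 1) =ᶠ[𝓝 x] fun u => cy u 1 := by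
    filter_upwards [eventually_gt_nhds hx] with u hu using hC.deriv_c_one hu
  rw [hg'.deriv_eq]
  exact (hC.hderiv_yy hx one_pos).deriv

theorem cy_eq_mul_cz_of_div_eq {G t y : ℝ} (ht : 0 < t) (hy : 0 < y)
    (hG : cy 1 t / cz 1 t = G) : cy y (y * t) = G * cz y (y * t) := by
  have h := hC.cy_mul_mul hy one_pos ht
  have h' := hC.cz_mul_mul hy one_pos ht
  rw [mul_one] at h h'
  rw [h, h', ← hG, div_mul_cancel₀ _ (hC.cz_pos one_pos ht).ne']

theorem elasticity_eq_of_cy_eq_mul_cz {G y z : ℝ} (hy : 0 < y) (hz : 0 < z)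
    (hss : cy y z = G * cz y z) :
    cy y z * cz y z / (c y z * cyz y z) =
      cy (y / z) 1 / -(y / z * (1 + G * (y / z)) * cyy (y / z) 1) := by
  have hx := div_pos hy hz
  have hcyy := (hC.cyy_neg hx one_pos).ne
  rw [← hC.cy_div_one hy hz] at hss ⊢
  have hg : c (y / z) 1 = cz y z * (1 + G * (y / z)) := by
    linear_combination -hC.cz_eq hy hz + y / z * hss
  have h1Gx : 1 + G * (y / z) ≠ 0 := by
    intro h
    rw [h, mul_zero] at hg
    exact (hC.c_pos hx one_pos).ne' hg
  rw [hC.c_eq_mul_c_div hy hz, hC.cyz_eq hy hz, hg]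
  have := (hC.cz_pos hy hz).ne'
  field_simp

end AssumptionC

theorem steadyState_params {w wb s : ℝ} (hw : 0 < w) (hwwb : w < wb)
    (hs : s = (wb - w) / (wb + 1)) :
    s ∈ Ioo 0 1 ∧ w + s = wb * (1 - s) ∧ s / (1 - s) = wb * (s / (w + s)) ∧
      (1 - w / wb) / (1 + w) = s / (w + s) := by
  have hwb : 0 < wb := hw.trans hwwb
  have hwb1 : 0 < wb + 1 := by linarith
  have hs1 : s < 1 := by rw [hs, div_lt_one hwb1]; linarith
  have hws : w + s = wb * (1 - s) := by rw [hs]; field_simp; ring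
  refine ⟨⟨?_, hs1⟩, hws, ?_, ?_⟩
  · rw [hs]; exact div_pos (by linarith) hwb1
  · rw [hws]
    field_simp [hwb.ne', (by linarith : 1 - s ≠ 0)]
  · have h1s : 1 - s = (1 + w) / (wb + 1) := by rw [hs]; field_simp; ring
    have h1w : 1 + w ≠ 0 := by linarith
    rw [hws, h1s, hs]
    field_simp

theorem one_lt_abs_div {n d : ℝ} (hd : d ≠ 0) (hdn : d < n) (hnd : 0 < n + d) :
    1 < |n / d| := by
  rw [abs_div, one_lt_div (abs_pos.mpr hd)]
  exact (abs_lt.mpr ⟨by linarith, hdn⟩).trans_le (le_abs_self n)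

theorem eigenvalue_ratio_of_eq_mul {K ε a b n d : ℝ} (hK : 0 < K) (hab : 0 < a + b)
    (hn : n = K * (ε + a)) (hd : d = K * (ε - b)) :
    d < n ∧ (d = 0 ↔ ε = b) ∧
      ((b - a) / 2 < ε → ε ≠ b → d ≠ 0 ∧ 1 < |n / d|) := by
  have hdn : d < n := by rw [hn, hd]; nlinarith
  have hd0 : d = 0 ↔ ε = b := by rw [hd, mul_eq_zero, sub_eq_zero]; simp [hK.ne']
  refine ⟨hdn, hd0, fun hlt hne => ?_⟩
  have hd0' : d ≠ 0 := mt hd0.mp hne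
  refine ⟨hd0', one_lt_abs_div hd0' hdn ?_⟩
  rw [hn, hd]
  nlinarith

theorem stmt_16_general (c cy cz cyy cyz czz : ℝ → ℝ → ℝ)
    (hC : AssumptionC c cy cz cyy cyz czz) (G w wb : ℝ)
    (hG : 1 < G) (hw : 0 < w)
    (hwb : cy 1 (G * wb) / cz 1 (G * wb) = G) (hwwb : w < wb)
    (s y z x ε n d : ℝ)
    (hs : s = (wb - w) / (wb + 1)) (hy : y = 1 - s) (hz : z = G * (w + s)) (hx : x = y / z)
    (hε : ε = cy y z * cz y z / (c y z * cyz y z))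
    (hn : n = deriv (fun u => c u 1) x -
      s * (1 + w) / (G * (w + s) ^ 2) * deriv (deriv (fun u => c u 1)) x)
    (hd : d = deriv (fun u => c u 1) x +
      s * (1 - s) * (1 + w) / (G * (w + s) ^ 3) * deriv (deriv (fun u => c u 1)) x) :
    s ∈ Ioo (0:ℝ) 1 ∧
    (n = (1 + (1 / ε) * (s / (1 - s))) * deriv (fun u => c u 1) x ∧
     d = (1 - (1 / ε) * (s / (w + s))) * deriv (fun u => c u 1) x) ∧
    d < n ∧
    (d = 0 ↔ ε = (1 - w / wb) / (1 + w)) ∧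
    (((1 - wb) / 2 * ((1 - w / wb) / (1 + w)) < ε ∧ ε ≠ (1 - w / wb) / (1 + w)) →
      d ≠ 0 ∧ 1 < |n / d|) := by
  obtain ⟨⟨hs0, hs1⟩, hws, hab, hratio⟩ := steadyState_params hw hwwb hs
  have hG0 : 0 < G := by linarith
  have hy0 : 0 < y := by rw [hy]; linarith
  have hz0 : 0 < z := by rw [hz]; nlinarith
  have hx0 : 0 < x := hx ▸ div_pos hy0 hz0
  have hss : cy y z = G * cz y z := by
    have hzy : z = y * (G * wb) := by rw [hz, hws, hy]; ring
    exact hzy ▸ hC.cy_eq_mul_cz_of_div_eq (by nlinarith) hy0 hwb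
  set K := -(x * (1 + G * x) * cyy x 1) with hK
  have hK0 : 0 < K :=
    neg_pos.mpr (mul_neg_of_pos_of_neg (by positivity) (hC.cyy_neg hx0 one_pos))
  have hεK : cy x 1 = ε * K := by
    rw [hε, hC.elasticity_eq_of_cy_eq_mul_cz hy0 hz0 hss, ← hx, div_mul_cancel₀ _ hK0.ne']
  have hε0 : 0 < ε := pos_of_mul_pos_left (hεK ▸ hC.cy_pos hx0 one_pos) hK0.le
  have hxs : x = (1 - s) / (G * (w + s)) := by rw [hx, hy, hz]
  rw [hC.deriv_deriv_c_one hx0] at hn hd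
  rw [hC.deriv_c_one hx0, hεK] at hn hd ⊢
  have hnK : n = K * (ε + s / (1 - s)) := by rw [hn, hK, hxs]; field_simp; ring
  have hdK : d = K * (ε - s / (w + s)) := by rw [hd, hK, hxs]; field_simp; ring
  obtain ⟨hdn, hd0, hratio_gt⟩ := eigenvalue_ratio_of_eq_mul hK0
    (add_pos (div_pos hs0 (by linarith)) (div_pos hs0 (by linarith))) hnK hdK
  rw [hratio]
  refine ⟨⟨hs0, hs1⟩, ⟨?_, ?_⟩, hdn, hd0, fun ⟨hlt, hne⟩ => hratio_gt ?_ hne⟩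
  · rw [hnK]; field_simp
  · rw [hdK]; field_simp
  · rw [hab]; linarith

/-- Eigenvalue computation at the bubbly steady state: with `s = (w_b^*−w)/(w_b^*+1)`,
`(y,z) = (1−s, G(w+s))`, `x = y/z`, `g u = c(u,1)`, `ε = c_y·c_z/(c·c_yz)`,
`n = g'(x) − (s(1+w)/(G(w+s)²))·g''(x)` and `d = g'(x) + (s(1−s)(1+w)/(G(w+s)³))·g''(x)`:
(a) `n = (1 + (1/ε)·s/(1−s))·g'(x)` and `d = (1 − (1/ε)·s/(w+s))·g'(x)`; (b) `n > d`;
(c) `d = 0 ↔ ε = (1−w/w_b^*)/(1+w)`; (d) under the EIS condition, `d ≠ 0` and `|n/d| > 1`. -/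
theorem stmt_16 (c cy cz cyy cyz czz : ℝ → ℝ → ℝ)
    (hC : AssumptionC c cy cz cyy cyz czz) (G w wb : ℝ)
    (hG : 1 < G) (hw : 0 < w)
    (hwb0 : 0 < wb) (hwb : cy 1 (G * wb) / cz 1 (G * wb) = G) (hwwb : w < wb)
    (s y z x ε n d : ℝ)
    (hs : s = (wb - w) / (wb + 1)) (hy : y = 1 - s) (hz : z = G * (w + s)) (hx : x = y / z)
    (hε : ε = cy y z * cz y z / (c y z * cyz y z))
    (hn : n = deriv (fun u => c u 1) x -
      s * (1 + w) / (G * (w + s) ^ 2) * deriv (deriv (fun u => c u 1)) x)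
    (hd : d = deriv (fun u => c u 1) x +
      s * (1 - s) * (1 + w) / (G * (w + s) ^ 3) * deriv (deriv (fun u => c u 1)) x) :
    s ∈ Ioo (0:ℝ) 1 ∧
    (n = (1 + (1 / ε) * (s / (1 - s))) * deriv (fun u => c u 1) x ∧
     d = (1 - (1 / ε) * (s / (w + s))) * deriv (fun u => c u 1) x) ∧
    d < n ∧
    (d = 0 ↔ ε = (1 - w / wb) / (1 + w)) ∧
    (((1 - wb) / 2 * ((1 - w / wb) / (1 + w)) < ε ∧ ε ≠ (1 - w / wb) / (1 + w)) →
      d ≠ 0 ∧ 1 < |n / d|) :=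
  stmt_16_general c cy cz cyy cyz czz hC G w wb hG hw hwb hwwb s y z x ε n d hs hy hz hx hε hn hd
end
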